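/- arXiv:1801.03019 — 5 statements merged into one kernel-verified Lean document; each statement's English description precedes it below -/
import Mathlib

section
/- Let p ≥ 3 be an integer, τ > 0, σ₀ > 0, ε > 0, and let β ∈ ℝ^p satisfy ‖β‖₀ = q (i.e., exactly q coordinates of β are nonzero) and β_j² ≤ K for all j, for some constant K > 0. If σ² given β has the inverse-gamma distribution with shape p/2 and scale ‖β‖²/(2τ²), i.e., P(σ² ≥ c | β) = ∫_c^∞ ((‖β‖²/(2τ²))^{p/2} / Γ(p/2)) · u^{−p/2−1} · exp(−‖β‖²/(2τ²u)) du for c > 0, then P(σ²/σ₀² ≥ ε | β) ≤ (q/(p−2)) · (K/τ²) · (1/(ε σ₀²)). -/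
/-!
Markov's inequality bounds `P(σ² ≥ c)` by `E[σ²] / c`. The mean of `IG(a, b)` is `b / (a - 1)`:
the substitution `u = x⁻¹` turns `∫ u ^ (-a) * exp (-b / u)` into the Gamma integral
`∫ x ^ (a - 2) * exp (-b x) = b ^ (1 - a) Γ(a - 1)`. With `a = p / 2`, `b = ‖β‖² / (2τ²)` and
`‖β‖² ≤ q K` this gives the bound.
-/

open MeasureTheory Real Set

-- No indicator of `0 < u`: the density is only integrated over subsets of `Ioi 0`.
noncomputable def invGammaDensity (a b u : ℝ) : ℝ :=
  b ^ a / Gamma a * u ^ (-a - 1) * exp (-(b / u))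

theorem eqOn_comp_rpow_neg_one_rpow_mul_exp_neg_mul (a b : ℝ) :
    EqOn (fun x : ℝ => (|(-1 : ℝ)| * x ^ ((-1 : ℝ) - 1)) •
        ((x ^ (-1 : ℝ)) ^ (a - 2) * exp (-(b * x ^ (-1 : ℝ)))))
      (fun u => u ^ (-a) * exp (-(b / u))) (Ioi 0) := by
  intro x (hx : 0 < x)
  simp only [smul_eq_mul, abs_neg, abs_one, one_mul, rpow_neg_one, ← mul_assoc, div_eq_mul_inv]
  rw [inv_rpow hx.le, ← rpow_neg hx.le, ← rpow_add hx]
  ring_nf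

section InverseGamma

variable {a b : ℝ}

theorem integrableOn_rpow_neg_mul_exp_neg_div (ha : 1 < a) (hb : 0 < b) :
    IntegrableOn (fun u : ℝ => u ^ (-a) * exp (-(b / u))) (Ioi 0) := by
  have hgamma : IntegrableOn (fun y : ℝ => y ^ (a - 2) * exp (-(b * y))) (Ioi 0) := by
    simpa only [rpow_one, neg_mul] using
      integrableOn_rpow_mul_exp_neg_mul_rpow (s := a - 2) (p := 1) (by linarith) one_pos hb
  exact ((integrableOn_Ioi_comp_rpow_iff _ (by norm_num)).2 hgamma).congr_fun
    (eqOn_comp_rpow_neg_one_rpow_mul_exp_neg_mul a b) measurableSet_Ioi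

theorem integral_rpow_neg_mul_exp_neg_div (ha : 1 < a) (hb : 0 < b) :
    ∫ u in Ioi 0, u ^ (-a) * exp (-(b / u)) = b ^ (1 - a) * Gamma (a - 1) := by
  rw [← setIntegral_congr_fun measurableSet_Ioi (eqOn_comp_rpow_neg_one_rpow_mul_exp_neg_mul a b),
    integral_comp_rpow_Ioi (fun y => y ^ (a - 2) * exp (-(b * y))) (by norm_num)]
  have h := integral_rpow_mul_exp_neg_mul_Ioi (a := a - 1) (by linarith) hb
  rw [show a - 1 - 1 = a - 2 by ring] at h
  rw [h, one_div, inv_rpow hb.le, ← rpow_neg hb.le, neg_sub]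

theorem invGammaDensity_nonneg (ha : 0 ≤ a) (hb : 0 ≤ b) {u : ℝ} (hu : 0 ≤ u) :
    0 ≤ invGammaDensity a b u := by
  have := Gamma_nonneg_of_nonneg ha
  unfold invGammaDensity
  positivity

theorem invGammaDensity_zero_right (ha : a ≠ 0) (u : ℝ) : invGammaDensity a 0 u = 0 := by
  simp [invGammaDensity, zero_rpow ha]

theorem mul_invGammaDensity {u : ℝ} (hu : 0 < u) :
    u * invGammaDensity a b u = b ^ a / Gamma a * (u ^ (-a) * exp (-(b / u))) := by
  rw [invGammaDensity, sub_eq_add_neg, rpow_add hu, rpow_neg_one]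
  field_simp

theorem integrableOn_mul_invGammaDensity (ha : 1 < a) (hb : 0 < b) :
    IntegrableOn (fun u => u * invGammaDensity a b u) (Ioi 0) :=
  IntegrableOn.congr_fun ((integrableOn_rpow_neg_mul_exp_neg_div ha hb).const_mul _)
    (fun _ hu => (mul_invGammaDensity hu).symm) measurableSet_Ioi

theorem integral_mul_invGammaDensity (ha : 1 < a) (hb : 0 < b) :
    ∫ u in Ioi 0, u * invGammaDensity a b u = b / (a - 1) := by
  rw [setIntegral_congr_fun measurableSet_Ioi (fun _ hu => mul_invGammaDensity hu),
    integral_const_mul, integral_rpow_neg_mul_exp_neg_div ha hb]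
  have hΓ : Gamma a = (a - 1) * Gamma (a - 1) := by
    simpa using Gamma_add_one (s := a - 1) (by linarith)
  have hΓ_ne : Gamma (a - 1) ≠ 0 := (Gamma_pos_of_pos (by linarith)).ne'
  rw [hΓ, rpow_sub hb, rpow_one]
  field_simp

theorem setIntegral_Ioi_invGammaDensity_le (ha : 1 < a) (hb : 0 ≤ b) {c : ℝ} (hc : 0 < c) :
    ∫ u in Ioi c, invGammaDensity a b u ≤ b / ((a - 1) * c) := by
  have ha0 : 0 < a := by linarith
  obtain rfl | hb_pos := hb.eq_or_lt
  · simp [invGammaDensity_zero_right ha0.ne']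
  have hsub : Ioi c ⊆ Ioi 0 := Ioi_subset_Ioi hc.le
  have hmean := integrableOn_mul_invGammaDensity ha hb_pos
  calc ∫ u in Ioi c, invGammaDensity a b u
      ≤ ∫ u in Ioi c, c⁻¹ * (u * invGammaDensity a b u) := by
        refine integral_mono_of_nonneg ?_ ((hmean.mono_set hsub).const_mul _) ?_
        · exact (ae_restrict_iff' measurableSet_Ioi).2 (.of_forall fun u (hu : c < u) =>
            invGammaDensity_nonneg ha0.le hb (by linarith))
        · refine (ae_restrict_iff' measurableSet_Ioi).2 (.of_forall fun u (hu : c < u) => ?_)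
          simp only [← mul_assoc]
          exact le_mul_of_one_le_left (invGammaDensity_nonneg ha0.le hb (by linarith))
            ((one_le_inv_mul₀ hc).2 hu.le)
    _ = c⁻¹ * ∫ u in Ioi c, u * invGammaDensity a b u := integral_const_mul _ _
    _ ≤ c⁻¹ * ∫ u in Ioi 0, u * invGammaDensity a b u := by
        refine mul_le_mul_of_nonneg_left ?_ (inv_nonneg.2 hc.le)
        exact setIntegral_mono_set hmean
          ((ae_restrict_iff' measurableSet_Ioi).2 (.of_forall fun u hu =>
            mul_nonneg (le_of_lt hu) (invGammaDensity_nonneg ha0.le hb (le_of_lt hu))))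
          hsub.eventuallyLE
    _ = b / ((a - 1) * c) := by
        rw [integral_mul_invGammaDensity ha hb_pos]
        field_simp

end InverseGamma

theorem sum_sq_le_card_ne_zero_mul {ι : Type*} [Fintype ι] (β : ι → ℝ) {K : ℝ}
    (hb : ∀ j, β j ^ 2 ≤ K) :
    ∑ j, β j ^ 2 ≤ (Finset.univ.filter fun j => β j ≠ 0).card * K := by
  rw [← Finset.sum_filter_of_ne fun j _ h => by simpa using h, ← nsmul_eq_mul]
  exact Finset.sum_le_card_nsmul _ _ _ fun j _ => hb j

theorem stmt_0_general (p q : ℕ) (hp : 3 ≤ p) (τ σ₀ ε K : ℝ)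
    (hσ₀ : 0 < σ₀) (hε : 0 < ε)
    (β : Fin p → ℝ)
    (hq : (Finset.univ.filter fun j => β j ≠ 0).card = q)
    (hb : ∀ j, (β j) ^ 2 ≤ K) :
    (∫ u in Set.Ioi (ε * σ₀ ^ 2),
        ((∑ j, (β j) ^ 2) / (2 * τ ^ 2)) ^ ((p : ℝ) / 2) / Real.Gamma ((p : ℝ) / 2) *
          u ^ (-(p : ℝ) / 2 - 1) * Real.exp (-(∑ j, (β j) ^ 2) / (2 * τ ^ 2 * u)))
      ≤ ((q : ℝ) / ((p : ℝ) - 2)) * (K / τ ^ 2) * (1 / (ε * σ₀ ^ 2)) := by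
  set S := ∑ j, β j ^ 2
  have hS : S ≤ q * K := hq ▸ sum_sq_le_card_ne_zero_mul β hb
  have hp2 : 0 < (p : ℝ) - 2 := by
    have : (3 : ℝ) ≤ p := by exact_mod_cast hp
    linarith
  have hdensity : ∀ u, (S / (2 * τ ^ 2)) ^ ((p : ℝ) / 2) / Gamma ((p : ℝ) / 2) *
      u ^ (-(p : ℝ) / 2 - 1) * exp (-S / (2 * τ ^ 2 * u))
        = invGammaDensity ((p : ℝ) / 2) (S / (2 * τ ^ 2)) u := fun u => by
    rw [invGammaDensity, neg_div, neg_div, div_div]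
  simp only [hdensity]
  calc ∫ u in Ioi (ε * σ₀ ^ 2), invGammaDensity ((p : ℝ) / 2) (S / (2 * τ ^ 2)) u
      ≤ S / (2 * τ ^ 2) / (((p : ℝ) / 2 - 1) * (ε * σ₀ ^ 2)) :=
        setIntegral_Ioi_invGammaDensity_le (by linarith) (by positivity) (by positivity)
    _ = S / ((p : ℝ) - 2) * (τ ^ 2)⁻¹ * (ε * σ₀ ^ 2)⁻¹ := by
        rw [show (p : ℝ) / 2 - 1 = ((p : ℝ) - 2) / 2 by ring]
        field_simp
    _ ≤ q * K / ((p : ℝ) - 2) * (τ ^ 2)⁻¹ * (ε * σ₀ ^ 2)⁻¹ := by gcongr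
    _ = ((q : ℝ) / ((p : ℝ) - 2)) * (K / τ ^ 2) * (1 / (ε * σ₀ ^ 2)) := by ring

/-- Proposition 1: the conjugate prior σ²|β ~ IG(p/2, ‖β‖²/(2τ²)) places small mass
on {σ²/σ₀² ≥ ε} when β is sparse and bounded. -/
theorem stmt_0 (p q : ℕ) (hp : 3 ≤ p) (τ σ₀ ε K : ℝ)
    (hτ : 0 < τ) (hσ₀ : 0 < σ₀) (hε : 0 < ε) (hK : 0 < K)
    (β : Fin p → ℝ)
    (hq : (Finset.univ.filter fun j => β j ≠ 0).card = q)
    (hb : ∀ j, (β j) ^ 2 ≤ K) :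
    (∫ u in Set.Ioi (ε * σ₀ ^ 2),
        ((∑ j, (β j) ^ 2) / (2 * τ ^ 2)) ^ ((p : ℝ) / 2) / Real.Gamma ((p : ℝ) / 2) *
          u ^ (-(p : ℝ) / 2 - 1) * Real.exp (-(∑ j, (β j) ^ 2) / (2 * τ ^ 2 * u)))
      ≤ ((q : ℝ) / ((p : ℝ) - 2)) * (K / τ ^ 2) * (1 / (ε * σ₀ ^ 2)) :=
  stmt_0_general p q hp τ σ₀ ε K hσ₀ hε β hq hb
end

section
/- Let p ≥ 1 be an integer, τ > 0, σ₀ > 0, ε > 0, and let β ∈ ℝ^p be nonzero with ‖β‖₀ = q and with min{β_j² : β_j ≠ 0} = K for some constant K > 0. If σ² given β has the inverse-gamma distribution with shape 1 and scale ‖β‖²/(2τ²), i.e., P(σ² ≥ c | β) = ∫_c^∞ (‖β‖²/(2τ²)) · u^{−2} · exp(−‖β‖²/(2τ²u)) du for c > 0, then P(σ²/σ₀² ≥ ε | β) ≥ 1 − exp(−qK/(2ε σ₀² τ²)). -/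
open MeasureTheory Real Filter Set Topology

/-!
The survival function of the inverse-gamma law IG(1, b) is explicit: `u ↦ exp (-b / u)` is a
primitive of the density `b u⁻² exp (-b / u)` and tends to `1` at infinity, so
`P(σ² > c) = 1 - exp (-b / c)`. With `b = ‖β‖² / (2τ²)` and `c = ε σ₀²` the claim follows from
`‖β‖² ≥ q K`, since each of the `q` nonzero coordinates contributes at least `K`.
-/

theorem hasDerivAt_exp_neg_div (b : ℝ) {u : ℝ} (hu : u ≠ 0) :
    HasDerivAt (fun u => exp (-b / u)) (b * u ^ (-2 : ℤ) * exp (-b / u)) u := by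
  have hinv : HasDerivAt (fun u => -b / u) (-b * -(u ^ 2)⁻¹) u := by
    simpa only [div_eq_mul_inv] using (hasDerivAt_inv hu).const_mul (-b)
  refine ((hasDerivAt_exp (-b / u)).comp u hinv).congr_deriv ?_
  rw [zpow_neg, zpow_ofNat]
  ring

theorem tendsto_exp_neg_div_atTop (b : ℝ) : Tendsto (fun u => exp (-b / u)) atTop (𝓝 1) := by
  have h : Tendsto (fun u : ℝ => -b / u) atTop (𝓝 0) :=
    tendsto_const_nhds.div_atTop tendsto_id
  simpa [Function.comp_def] using (continuous_exp.tendsto 0).comp h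

theorem integral_Ioi_mul_zpow_neg_two_mul_exp_neg_div {b c : ℝ} (hb : 0 ≤ b) (hc : 0 < c) :
    ∫ u in Ioi c, b * u ^ (-2 : ℤ) * exp (-b / u) = 1 - exp (-b / c) := by
  refine integral_Ioi_of_hasDerivAt_of_nonneg'
    (fun u hu => hasDerivAt_exp_neg_div b (hc.trans_le hu).ne') (fun u hu => ?_)
    (tendsto_exp_neg_div_atTop b)
  have : 0 < u := hc.trans hu
  positivity

theorem card_support_mul_le_sum_sq {ι : Type*} [Fintype ι] (β : ι → ℝ) {K : ℝ}
    (hK : ∀ j, β j ≠ 0 → K ≤ β j ^ 2) :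
    (Finset.univ.filter fun j => β j ≠ 0).card * K ≤ ∑ j, β j ^ 2 := by
  calc _ = ∑ _j ∈ Finset.univ.filter (fun j => β j ≠ 0), K := by
        rw [Finset.sum_const, nsmul_eq_mul]
    _ ≤ ∑ j ∈ Finset.univ.filter (fun j => β j ≠ 0), β j ^ 2 :=
        Finset.sum_le_sum fun j hj => hK j (Finset.mem_filter.mp hj).2
    _ ≤ ∑ j, β j ^ 2 :=
        Finset.sum_le_sum_of_subset_of_nonneg (Finset.filter_subset _ _) fun j _ _ => sq_nonneg _

theorem stmt_1_general (p q : ℕ) (τ σ₀ ε K : ℝ)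
    (hτ : 0 < τ) (hσ₀ : 0 < σ₀) (hε : 0 < ε)
    (β : Fin p → ℝ)
    (hq : (Finset.univ.filter fun j => β j ≠ 0).card = q)
    (hKmin : IsLeast ((fun j => (β j) ^ 2) '' {j | β j ≠ 0}) K) :
    1 - Real.exp (-((q : ℝ) * K) / (2 * ε * σ₀ ^ 2 * τ ^ 2)) ≤
      ∫ u in Set.Ioi (ε * σ₀ ^ 2),
        (∑ j, (β j) ^ 2) / (2 * τ ^ 2) * u ^ (-2 : ℤ) *
          Real.exp (-(∑ j, (β j) ^ 2) / (2 * τ ^ 2 * u)) := by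
  set S := ∑ j, β j ^ 2
  have hqK : q * K ≤ S :=
    hq ▸ card_support_mul_le_sum_sq β fun j hj => hKmin.2 ⟨j, hj, rfl⟩
  simp_rw [show ∀ u, -S / (2 * τ ^ 2 * u) = -(S / (2 * τ ^ 2)) / u from
    fun u => by rw [neg_div, neg_div, div_div]]
  rw [integral_Ioi_mul_zpow_neg_two_mul_exp_neg_div (by positivity) (by positivity)]
  gcongr 1 - exp ?_
  rw [neg_div, neg_div, neg_le_neg_iff, div_div,
    show 2 * ε * σ₀ ^ 2 * τ ^ 2 = 2 * τ ^ 2 * (ε * σ₀ ^ 2) by ring]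
  gcongr

/-- Proposition 2: the p-sigma prior induces σ²|β ~ IG(1, ‖β‖²/(2τ²)), which places
large mass on {σ²/σ₀² ≥ ε} when the sparsity q grows. -/
theorem stmt_1 (p q : ℕ) (hp : 1 ≤ p) (τ σ₀ ε K : ℝ)
    (hτ : 0 < τ) (hσ₀ : 0 < σ₀) (hε : 0 < ε) (hK : 0 < K)
    (β : Fin p → ℝ) (hβ : β ≠ 0)
    (hq : (Finset.univ.filter fun j => β j ≠ 0).card = q)
    (hKmin : IsLeast ((fun j => (β j) ^ 2) '' {j | β j ≠ 0}) K) :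
    1 - Real.exp (-((q : ℝ) * K) / (2 * ε * σ₀ ^ 2 * τ ^ 2)) ≤
      ∫ u in Set.Ioi (ε * σ₀ ^ 2),
        (∑ j, (β j) ^ 2) / (2 * τ ^ 2) * u ^ (-2 : ℤ) *
          Real.exp (-(∑ j, (β j) ^ 2) / (2 * τ ^ 2 * u)) :=
  stmt_1_general p q τ σ₀ ε K hτ hσ₀ hε β hq hKmin
end

section
/- Let (n_k), (p_k), (q_k) be sequences of positive integers with n_k + p_k > 2 for all k, and let M₁, M₂, S > 0 be constants. For each k let Y_k ∈ ℝ^{n_k}, X_k ∈ ℝ^{n_k×p_k}, β*_k ∈ ℝ^{p_k} with exactly q_k nonzero coordinates, each nonzero coordinate satisfying (β*_{k,j})² ≤ M₁, let τ_k > 0 and λ_{k,1}, …, λ_{k,p_k} > 0 satisfy τ_k² λ_{k,j}² ≥ M₂ whenever β*_{k,j} ≠ 0, and suppose ‖Y_k − X_k β*_k‖²/n_k ≤ S for all k. If p_k/n_k → ∞ and q_k/p_k → 0 as k → ∞, then (‖Y_k − X_k β*_k‖² + Σ_j (β*_{k,j})²/(λ_{k,j}² τ_k²)) / (n_k + p_k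 − 2) → 0. -/
open Matrix Filter

/-- Proposition 3 (asymptotic conclusion): if p_k/n_k → ∞ and q_k/p_k → 0, the
conditional posterior mean of σ² under the conjugate global-local prior tends to 0. -/
theorem stmt_5 (n p q : ℕ → ℕ)
    (hn : ∀ k, 1 ≤ n k) (hp : ∀ k, 1 ≤ p k) (hq : ∀ k, 1 ≤ q k)
    (hnp : ∀ k, 2 < n k + p k)
    (M₁ M₂ S : ℝ) (hM₁ : 0 < M₁) (hM₂ : 0 < M₂) (hS : 0 < S)
    (Y : ∀ k, Fin (n k) → ℝ) (X : ∀ k, Matrix (Fin (n k)) (Fin (p k)) ℝ)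
    (β : ∀ k, Fin (p k) → ℝ)
    (τ : ℕ → ℝ) (lam : ∀ k, Fin (p k) → ℝ)
    (hτ : ∀ k, 0 < τ k) (hlam : ∀ k j, 0 < lam k j)
    (hcard : ∀ k, (Finset.univ.filter fun j => β k j ≠ 0).card = q k)
    (hbound : ∀ k j, β k j ≠ 0 → (β k j) ^ 2 ≤ M₁)
    (hM2 : ∀ k j, β k j ≠ 0 → M₂ ≤ (τ k) ^ 2 * (lam k j) ^ 2)
    (hS' : ∀ k, (∑ i, (Y k i - (X k).mulVec (β k) i) ^ 2) / (n k : ℝ) ≤ S)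
    (hpn : Tendsto (fun k => (p k : ℝ) / (n k : ℝ)) atTop atTop)
    (hqp : Tendsto (fun k => (q k : ℝ) / (p k : ℝ)) atTop (nhds 0)) :
    Tendsto (fun k =>
        ((∑ i, (Y k i - (X k).mulVec (β k) i) ^ 2) +
            ∑ j, (β k j) ^ 2 / ((lam k j) ^ 2 * (τ k) ^ 2)) /
          ((n k : ℝ) + (p k : ℝ) - 2)) atTop (nhds 0) := by
  have hn' : ∀ k, (0:ℝ) < n k := fun k => by exact_mod_cast (hn k)
  have hden : ∀ k, (0:ℝ) < (n k : ℝ) + (p k : ℝ) - 2 := by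
    intro k
    have := hnp k
    have : (2:ℝ) < (n k : ℝ) + (p k : ℝ) := by exact_mod_cast this
    linarith
  -- p → ∞
  have hpt : Tendsto (fun k => (p k : ℝ)) atTop atTop := by
    refine tendsto_atTop_mono (fun k => ?_) hpn
    exact div_le_self (by positivity) (by exact_mod_cast hn k)
  -- A : n/(n+p-2) → 0
  have hA : Tendsto (fun k => (n k : ℝ) / ((n k : ℝ) + (p k : ℝ) - 2)) atTop (nhds 0) := by
    have heq : ∀ k, (n k : ℝ) / ((n k : ℝ) + (p k : ℝ) - 2)
        = (1 + ((p k : ℝ) - 2) / (n k : ℝ))⁻¹ := by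
      intro k
      rw [one_add_div (hn' k).ne', inv_div]
      ring_nf
    simp only [heq]
    refine Tendsto.inv_tendsto_atTop ?_
    have h1 : Tendsto (fun k => (p k : ℝ) / (n k : ℝ) - 2) atTop atTop :=
      tendsto_atTop_add_const_right _ _ hpn
    have h2 : Tendsto (fun k => ((p k : ℝ) - 2) / (n k : ℝ)) atTop atTop := by
      refine tendsto_atTop_mono (fun k => ?_) h1
      rw [sub_div]
      have : (2:ℝ) / (n k : ℝ) ≤ 2 :=
        div_le_self (by norm_num) (by exact_mod_cast hn k)
      linarith
    exact tendsto_atTop_add_const_left _ _ h2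
  -- B : q/(n+p-2) → 0
  have hB : Tendsto (fun k => (q k : ℝ) / ((n k : ℝ) + (p k : ℝ) - 2)) atTop (nhds 0) := by
    have h2q : Tendsto (fun k => 2 * ((q k : ℝ) / (p k : ℝ))) atTop (nhds 0) := by
      simpa using hqp.const_mul 2
    refine squeeze_zero' (Eventually.of_forall fun k => div_nonneg (by positivity) (hden k).le) ?_ h2q
    filter_upwards [hpt.eventually_ge_atTop 2] with k hk2
    have hhalf : (p k : ℝ) / 2 ≤ (n k : ℝ) + (p k : ℝ) - 2 := by
      have : (1:ℝ) ≤ (n k : ℝ) := by exact_mod_cast hn k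
      linarith
    calc (q k : ℝ) / ((n k : ℝ) + (p k : ℝ) - 2)
        ≤ (q k : ℝ) / ((p k : ℝ) / 2) := by
          apply div_le_div_of_nonneg_left (by positivity) (by linarith) hhalf
      _ = 2 * ((q k : ℝ) / (p k : ℝ)) := by
          rw [div_div_eq_mul_div]; ring
  -- combine
  have hg : Tendsto (fun k => S * ((n k : ℝ) / ((n k : ℝ) + (p k : ℝ) - 2))
      + (M₁ / M₂) * ((q k : ℝ) / ((n k : ℝ) + (p k : ℝ) - 2))) atTop (nhds 0) := by
    have := (hA.const_mul S).add (hB.const_mul (M₁ / M₂))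
    simpa using this
  refine squeeze_zero' (Eventually.of_forall fun k => ?_) (Eventually.of_forall fun k => ?_) hg
  · have h1 : (0:ℝ) ≤ ∑ i, (Y k i - (X k).mulVec (β k) i) ^ 2 := by positivity
    have h2 : (0:ℝ) ≤ ∑ j, (β k j) ^ 2 / ((lam k j) ^ 2 * (τ k) ^ 2) := by positivity
    exact div_nonneg (by linarith) (hden k).le
  · -- numerator bounds
    have h1 : (∑ i, (Y k i - (X k).mulVec (β k) i) ^ 2) ≤ S * (n k : ℝ) := by
      have := hS' k
      rwa [div_le_iff₀ (hn' k)] at this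
    have h2 : (∑ j, (β k j) ^ 2 / ((lam k j) ^ 2 * (τ k) ^ 2)) ≤ (M₁ / M₂) * (q k : ℝ) := by
      have hsum : (∑ j, (β k j) ^ 2 / ((lam k j) ^ 2 * (τ k) ^ 2))
          = ∑ j ∈ Finset.univ.filter (fun j => β k j ≠ 0),
              (β k j) ^ 2 / ((lam k j) ^ 2 * (τ k) ^ 2) := by
        refine (Finset.sum_subset (Finset.filter_subset _ _) ?_).symm
        intro j _ hj
        simp only [Finset.mem_filter, Finset.mem_univ, true_and, not_not] at hj
        simp [hj]
      rw [hsum]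
      calc ∑ j ∈ Finset.univ.filter (fun j => β k j ≠ 0),
              (β k j) ^ 2 / ((lam k j) ^ 2 * (τ k) ^ 2)
          ≤ ∑ _j ∈ Finset.univ.filter (fun j => β k j ≠ 0), M₁ / M₂ := by
            refine Finset.sum_le_sum fun j hj => ?_
            simp only [Finset.mem_filter, Finset.mem_univ, true_and] at hj
            have hb := hbound k j hj
            have hm := hM2 k j hj
            have hpos : (0:ℝ) < (lam k j) ^ 2 * (τ k) ^ 2 := mul_pos (pow_pos (hlam k j) 2) (pow_pos (hτ k) 2)
            exact div_le_div₀ (le_of_lt hM₁) hb hM₂ (by linarith [hm])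
        _ = (M₁ / M₂) * (q k : ℝ) := by
            rw [Finset.sum_const, hcard k, nsmul_eq_mul, mul_comm]
    calc ((∑ i, (Y k i - (X k).mulVec (β k) i) ^ 2) +
            ∑ j, (β k j) ^ 2 / ((lam k j) ^ 2 * (τ k) ^ 2)) /
          ((n k : ℝ) + (p k : ℝ) - 2)
        ≤ (S * (n k : ℝ) + (M₁ / M₂) * (q k : ℝ)) / ((n k : ℝ) + (p k : ℝ) - 2) := by
          exact (div_le_div_iff_of_pos_right (hden k)).mpr (by linarith)
      _ = S * ((n k : ℝ) / ((n k : ℝ) + (p k : ℝ) - 2))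
          + (M₁ / M₂) * ((q k : ℝ) / ((n k : ℝ) + (p k : ℝ) - 2)) := by
          rw [add_div, mul_div_assoc, mul_div_assoc]
end

section
/- Let n, p ≥ 1 be integers with n > 2, X ∈ ℝ^{n×p}, Y ∈ ℝ^n nonzero, τ > 0, and set H_τ = X(XᵀX + τ^{−2}I_p)^{−1}Xᵀ. Then both integrals below over (β, v) ∈ ℝ^p × (0,∞) are finite and (∫_0^∞ ∫_{ℝ^p} v · v^{−(n+p)/2−1} exp(−(‖Y − Xβ‖² + ‖β‖²/τ²)/(2v)) dβ dv) / (∫_0^∞ ∫_{ℝ^p} v^{−(n+p)/2−1} exp(−(‖Y − Xβ‖² + ‖β‖²/τ²)/(2v)) dβ dv) = Yᵀ(I_n − H_τ)Y/(n − 2). -/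
/-!
Completing the square gives `‖Y - Xβ‖² + ‖β‖²/τ² = (β - μ)ᵀ A (β - μ) + c` with
`A = XᵀX + τ⁻² I`, `μ = A⁻¹XᵀY` and `c = Yᵀ(I - H_τ)Y > 0`. Rescaling `β - μ` by `√v`, the
`β`-integral of `exp (-(…)/(2v))` is `v^{p/2} e^{-c/(2v)}` times a positive Gaussian constant,
so the marginal in `v` is the inverse-gamma kernel `v^{-n/2-1} e^{-c/(2v)}`. The substitution
`v = 1/y` turns it into a gamma integral, `∫ v^{-s-1} e^{-c/(2v)} dv = (2/c)^s Γ(s)`, and the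
ratio is the inverse-gamma mean `(c/2)/(n/2 - 1)`.
-/

open MeasureTheory Matrix

open Real Set

section InverseGamma

variable {s c : ℝ}

/-- The substitution `y = v⁻¹` (in the shape of `integral_comp_rpow_Ioi` with exponent `-1`)
turns the gamma kernel `y ^ (s - 1) * exp (-(c / 2 * y))` into the inverse-gamma kernel. -/
lemma eqOn_rpow_mul_exp_neg_div_Ioi :
    EqOn (fun v : ℝ => v ^ ((-1 : ℝ) - 1) •
        ((v ^ (-1 : ℝ)) ^ (s - 1) * exp (-(c / 2 * v ^ (-1 : ℝ)))))
      (fun v => v ^ (-s - 1) * exp (-c / (2 * v))) (Ioi 0) := by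
  intro v (hv : 0 < v)
  simp only
  rw [smul_eq_mul, ← rpow_mul hv.le, ← mul_assoc, ← rpow_add hv, rpow_neg_one]
  congr 2
  · ring
  · field_simp

lemma integrableOn_rpow_mul_exp_neg_div_Ioi (hs : 0 < s) (hc : 0 < c) :
    IntegrableOn (fun v : ℝ => v ^ (-s - 1) * exp (-c / (2 * v))) (Ioi 0) := by
  have hgamma : IntegrableOn (fun y : ℝ => y ^ (s - 1) * exp (-(c / 2 * y))) (Ioi 0) := by
    simpa only [rpow_one, neg_mul] using
      integrableOn_rpow_mul_exp_neg_mul_rpow (s := s - 1) (by linarith) one_pos (half_pos hc)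
  exact ((integrableOn_Ioi_comp_rpow_iff' _ (by norm_num)).2 hgamma).congr_fun
    eqOn_rpow_mul_exp_neg_div_Ioi measurableSet_Ioi

lemma integral_rpow_mul_exp_neg_div_Ioi (hs : 0 < s) (hc : 0 < c) :
    ∫ v in Ioi 0, v ^ (-s - 1) * exp (-c / (2 * v)) = (2 / c) ^ s * Gamma s := by
  rw [← setIntegral_congr_fun measurableSet_Ioi eqOn_rpow_mul_exp_neg_div_Ioi]
  have hsubst := integral_comp_rpow_Ioi (fun y : ℝ => y ^ (s - 1) * exp (-(c / 2 * y)))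
    (p := -1) (by norm_num)
  simp only [abs_neg, abs_one, one_mul] at hsubst
  rw [hsubst, integral_rpow_mul_exp_neg_mul_Ioi hs (half_pos hc), one_div_div]

lemma integral_mul_rpow_mul_exp_neg_div_Ioi (hs : 1 < s) (hc : 0 < c) :
    ∫ v in Ioi 0, v * (v ^ (-s - 1) * exp (-c / (2 * v))) =
      c / (2 * (s - 1)) * ∫ v in Ioi 0, v ^ (-s - 1) * exp (-c / (2 * v)) := by
  have hs₁ : 0 < s - 1 := by linarith
  have hshift : EqOn (fun v : ℝ => v * (v ^ (-s - 1) * exp (-c / (2 * v))))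
      (fun v => v ^ (-(s - 1) - 1) * exp (-c / (2 * v))) (Ioi 0) := by
    intro v (hv : 0 < v)
    simp only
    rw [← mul_assoc, ← rpow_one_add' hv.le (by linarith)]
    ring_nf
  rw [setIntegral_congr_fun measurableSet_Ioi hshift, integral_rpow_mul_exp_neg_div_Ioi hs₁ hc,
    integral_rpow_mul_exp_neg_div_Ioi (by linarith) hc]
  have hΓ : Gamma s = (s - 1) * Gamma (s - 1) := by
    rw [← Gamma_add_one hs₁.ne', sub_add_cancel]
  have hpow : (2 / c) ^ s = (2 / c) ^ (s - 1) * (2 / c) := by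
    rw [← rpow_add_one (by positivity), sub_add_cancel]
  rw [hΓ, hpow]
  field_simp

end InverseGamma

section QuadraticForm

variable {p : ℕ} (A : Matrix (Fin p) (Fin p) ℝ)

lemma integrable_exp_neg_mul_dotProduct_self {b : ℝ} (hb : 0 < b) :
    Integrable (fun x : Fin p → ℝ => exp (-b * (x ⬝ᵥ x))) := by
  have hprod : (fun x : Fin p → ℝ => exp (-b * (x ⬝ᵥ x))) = fun x => ∏ j, exp (-b * x j ^ 2) := by
    ext x
    simp only [dotProduct, Finset.mul_sum, ← exp_sum, sq]
  rw [hprod]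
  exact Integrable.fintype_prod fun _ => integrable_exp_neg_mul_sq hb

lemma integrable_exp_neg_dotProduct_mulVec {b : ℝ} (hb : 0 < b)
    (hA : ∀ x, b * (x ⬝ᵥ x) ≤ x ⬝ᵥ A *ᵥ x) :
    Integrable (fun x : Fin p → ℝ => exp (-(x ⬝ᵥ A *ᵥ x) / 2)) := by
  refine (integrable_exp_neg_mul_dotProduct_self (half_pos hb)).mono' (by fun_prop) ?_
  refine ae_of_all _ fun x => ?_
  rw [norm_of_nonneg (exp_pos _).le, exp_le_exp]
  linarith [hA x]

lemma integral_exp_neg_dotProduct_mulVec_pos {b : ℝ} (hb : 0 < b)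
    (hA : ∀ x, b * (x ⬝ᵥ x) ≤ x ⬝ᵥ A *ᵥ x) :
    0 < ∫ x : Fin p → ℝ, exp (-(x ⬝ᵥ A *ᵥ x) / 2) :=
  integral_exp_pos (integrable_exp_neg_dotProduct_mulVec A hb hA)

lemma exp_neg_dotProduct_mulVec_div {v : ℝ} (hv : 0 < v) (x : Fin p → ℝ) :
    exp (-(x ⬝ᵥ A *ᵥ x) / (2 * v)) =
      exp (-(((√v)⁻¹ • x) ⬝ᵥ A *ᵥ ((√v)⁻¹ • x)) / 2) := by
  rw [mulVec_smul, smul_dotProduct, dotProduct_smul, smul_eq_mul, smul_eq_mul, ← mul_assoc,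
    ← mul_inv, mul_self_sqrt hv.le]
  field_simp

lemma integrable_exp_neg_dotProduct_mulVec_div {b v : ℝ} (hb : 0 < b) (hv : 0 < v)
    (hA : ∀ x, b * (x ⬝ᵥ x) ≤ x ⬝ᵥ A *ᵥ x) :
    Integrable (fun x : Fin p → ℝ => exp (-(x ⬝ᵥ A *ᵥ x) / (2 * v))) := by
  simp_rw [exp_neg_dotProduct_mulVec_div A hv]
  exact (integrable_exp_neg_dotProduct_mulVec A hb hA).comp_smul (R := (√v)⁻¹) (by positivity)

lemma integral_exp_neg_dotProduct_mulVec_div {v : ℝ} (hv : 0 < v) :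
    ∫ x : Fin p → ℝ, exp (-(x ⬝ᵥ A *ᵥ x) / (2 * v)) =
      v ^ ((p : ℝ) / 2) * ∫ x : Fin p → ℝ, exp (-(x ⬝ᵥ A *ᵥ x) / 2) := by
  have hscale := Measure.integral_comp_inv_smul_of_nonneg volume
    (fun x : Fin p → ℝ => exp (-(x ⬝ᵥ A *ᵥ x) / 2)) (sqrt_nonneg v)
  simp_rw [exp_neg_dotProduct_mulVec_div A hv]
  rw [hscale, Module.finrank_fin_fun, smul_eq_mul, sqrt_eq_rpow, ← rpow_natCast,
    ← rpow_mul hv.le, one_div_mul_eq_div]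

end QuadraticForm

section Ridge

variable {n p : ℕ} (X : Matrix (Fin n) (Fin p) ℝ) {κ : ℝ}

lemma dotProduct_gram_add_smul_one_mulVec (x : Fin p → ℝ) :
    x ⬝ᵥ (Xᵀ * X + κ • 1) *ᵥ x = (X *ᵥ x) ⬝ᵥ (X *ᵥ x) + κ * (x ⬝ᵥ x) := by
  rw [add_mulVec, dotProduct_add, ← mulVec_mulVec, dotProduct_transpose_mulVec, smul_mulVec,
    one_mulVec, dotProduct_smul, smul_eq_mul, dotProduct_comm]

lemma mul_dotProduct_self_le_dotProduct_gram_add_smul_one_mulVec (x : Fin p → ℝ) :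
    κ * (x ⬝ᵥ x) ≤ x ⬝ᵥ (Xᵀ * X + κ • 1) *ᵥ x := by
  rw [dotProduct_gram_add_smul_one_mulVec]
  exact le_add_of_nonneg_left (dotProduct_star_self_nonneg _)

lemma posDef_gram_add_smul_one (hκ : 0 < κ) : (Xᵀ * X + κ • 1).PosDef :=
  PosDef.posSemidef_add (posSemidef_conjTranspose_mul_self X) (PosDef.one.smul hκ)

lemma sub_dotProduct_sub_add_mul_dotProduct_self_eq (hκ : 0 < κ) (Y : Fin n → ℝ) (β : Fin p → ℝ) :
    (Y - X *ᵥ β) ⬝ᵥ (Y - X *ᵥ β) + κ * (β ⬝ᵥ β) =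
      (β - (Xᵀ * X + κ • 1)⁻¹ *ᵥ Xᵀ *ᵥ Y) ⬝ᵥ (Xᵀ * X + κ • 1) *ᵥ
          (β - (Xᵀ * X + κ • 1)⁻¹ *ᵥ Xᵀ *ᵥ Y) +
        Y ⬝ᵥ (1 - X * (Xᵀ * X + κ • 1)⁻¹ * Xᵀ) *ᵥ Y := by
  set A := Xᵀ * X + κ • 1
  set μ := A⁻¹ *ᵥ Xᵀ *ᵥ Y
  have hAμ : A *ᵥ μ = Xᵀ *ᵥ Y := by
    rw [mulVec_mulVec, mul_nonsing_inv _ ((isUnit_iff_isUnit_det A).1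
      (posDef_gram_add_smul_one X hκ).isUnit), one_mulVec]
  have hAT : Aᵀ = A := by simp [A, transpose_add, transpose_mul]
  have hsquare :
      (β - μ) ⬝ᵥ A *ᵥ (β - μ) = β ⬝ᵥ A *ᵥ β - 2 * (β ⬝ᵥ A *ᵥ μ) + μ ⬝ᵥ A *ᵥ μ := by
    rw [mulVec_sub, dotProduct_sub, sub_dotProduct, sub_dotProduct,
      ← dotProduct_transpose_mulVec A μ β, hAT]
    ring
  have hproj : Y ⬝ᵥ (X * A⁻¹ * Xᵀ) *ᵥ Y = μ ⬝ᵥ A *ᵥ μ := by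
    rw [hAμ, dotProduct_transpose_mulVec, ← mulVec_mulVec, ← mulVec_mulVec]
  rw [hsquare, sub_mulVec, one_mulVec, dotProduct_sub Y, hproj, hAμ,
    dotProduct_gram_add_smul_one_mulVec, dotProduct_transpose_mulVec]
  simp only [sub_dotProduct, dotProduct_sub, dotProduct_comm Y (X *ᵥ β)]
  ring

lemma dotProduct_one_sub_mul_inv_mul_transpose_pos (hκ : 0 < κ) {Y : Fin n → ℝ} (hY : Y ≠ 0) :
    0 < Y ⬝ᵥ (1 - X * (Xᵀ * X + κ • 1)⁻¹ * Xᵀ) *ᵥ Y := by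
  have hμ := sub_dotProduct_sub_add_mul_dotProduct_self_eq X hκ Y ((Xᵀ * X + κ • 1)⁻¹ *ᵥ Xᵀ *ᵥ Y)
  simp only [sub_self, mulVec_zero, dotProduct_zero, zero_add] at hμ
  rw [← hμ]
  by_cases h : (Xᵀ * X + κ • 1)⁻¹ *ᵥ Xᵀ *ᵥ Y = 0
  · simpa [h] using dotProduct_star_self_pos_iff.2 hY
  · exact add_pos_of_nonneg_of_pos (dotProduct_star_self_nonneg _)
      (mul_pos hκ (dotProduct_star_self_pos_iff.2 h))

end Ridge

section NormalInvGamma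

variable {p : ℕ} (A : Matrix (Fin p) (Fin p) ℝ) (μ : Fin p → ℝ)

noncomputable def normalInvGammaKernel (c m v : ℝ) (β : Fin p → ℝ) : ℝ :=
  v ^ (-(m + p) / 2 - 1) * exp (-((β - μ) ⬝ᵥ A *ᵥ (β - μ) + c) / (2 * v))

variable {b c m v : ℝ}

lemma normalInvGammaKernel_eq (β : Fin p → ℝ) :
    normalInvGammaKernel A μ c m v β =
      v ^ (-(m + p) / 2 - 1) * exp (-c / (2 * v)) *
        exp (-((β - μ) ⬝ᵥ A *ᵥ (β - μ)) / (2 * v)) := by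
  rw [normalInvGammaKernel, mul_assoc, ← exp_add]
  congr 2
  ring

lemma integrable_normalInvGammaKernel_slice (hb : 0 < b)
    (hA : ∀ x, b * (x ⬝ᵥ x) ≤ x ⬝ᵥ A *ᵥ x) (hv : 0 < v) :
    Integrable (normalInvGammaKernel A μ c m v) := by
  rw [show normalInvGammaKernel A μ c m v = _ from funext (normalInvGammaKernel_eq A μ)]
  exact ((integrable_exp_neg_dotProduct_mulVec_div A hb hv hA).comp_sub_right μ).const_mul _

lemma integral_normalInvGammaKernel_slice (hv : 0 < v) :
    ∫ β, normalInvGammaKernel A μ c m v β =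
      (∫ x : Fin p → ℝ, exp (-(x ⬝ᵥ A *ᵥ x) / 2)) *
        (v ^ (-(m / 2) - 1) * exp (-c / (2 * v))) := by
  have hpow : v ^ (-(m + p) / 2 - 1) * v ^ ((p : ℝ) / 2) = v ^ (-(m / 2) - 1) := by
    rw [← rpow_add hv]
    ring_nf
  simp_rw [normalInvGammaKernel_eq]
  rw [integral_const_mul, integral_sub_right_eq_self
    (fun x => exp (-(x ⬝ᵥ A *ᵥ x) / (2 * v))) μ, integral_exp_neg_dotProduct_mulVec_div A hv,
    ← hpow]
  ring

lemma integrable_normalInvGammaKernel (hb : 0 < b) (hA : ∀ x, b * (x ⬝ᵥ x) ≤ x ⬝ᵥ A *ᵥ x)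
    (hc : 0 < c) (hm : 0 < m) :
    Integrable (fun q : ℝ × (Fin p → ℝ) => normalInvGammaKernel A μ c m q.1 q.2)
      ((volume.restrict (Ioi 0)).prod volume) := by
  have hmeas : Measurable fun q : ℝ × (Fin p → ℝ) => normalInvGammaKernel A μ c m q.1 q.2 := by
    unfold normalInvGammaKernel
    fun_prop
  rw [integrable_prod_iff hmeas.aestronglyMeasurable]
  constructor
  · filter_upwards [ae_restrict_mem measurableSet_Ioi] with v hv
    exact integrable_normalInvGammaKernel_slice A μ hb hA hv
  · refine ((integrableOn_rpow_mul_exp_neg_div_Ioi (half_pos hm) hc).const_mul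
      (∫ x : Fin p → ℝ, exp (-(x ⬝ᵥ A *ᵥ x) / 2))).congr ?_
    filter_upwards [ae_restrict_mem measurableSet_Ioi] with v (hv : 0 < v)
    rw [← integral_normalInvGammaKernel_slice A μ hv]
    refine integral_congr_ae (ae_of_all _ fun β => (norm_of_nonneg ?_).symm)
    rw [normalInvGammaKernel]
    positivity

lemma mul_normalInvGammaKernel (hv : 0 < v) (β : Fin p → ℝ) :
    v * normalInvGammaKernel A μ c m v β = normalInvGammaKernel A μ c (m - 2) v β := by
  rw [normalInvGammaKernel, normalInvGammaKernel, ← mul_assoc]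
  nth_rewrite 1 [← rpow_one v]
  rw [← rpow_add hv]
  ring_nf

lemma integrable_mul_normalInvGammaKernel (hb : 0 < b) (hA : ∀ x, b * (x ⬝ᵥ x) ≤ x ⬝ᵥ A *ᵥ x)
    (hc : 0 < c) (hm : 2 < m) :
    Integrable (fun q : ℝ × (Fin p → ℝ) => q.1 * normalInvGammaKernel A μ c m q.1 q.2)
      ((volume.restrict (Ioi 0)).prod volume) := by
  refine (integrable_normalInvGammaKernel A μ hb hA hc (sub_pos.2 hm)).congr ?_
  rw [← Measure.restrict_univ (μ := (volume : Measure (Fin p → ℝ))), Measure.prod_restrict]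
  filter_upwards [ae_restrict_mem (measurableSet_Ioi.prod MeasurableSet.univ)] with q hq
  exact (mul_normalInvGammaKernel A μ hq.1 q.2).symm

lemma integral_mul_normalInvGammaKernel_div (hb : 0 < b)
    (hA : ∀ x, b * (x ⬝ᵥ x) ≤ x ⬝ᵥ A *ᵥ x) (hc : 0 < c) (hm : 2 < m) :
    (∫ v in Ioi 0, ∫ β, v * normalInvGammaKernel A μ c m v β) /
      (∫ v in Ioi 0, ∫ β, normalInvGammaKernel A μ c m v β) = c / (m - 2) := by
  set I := ∫ x : Fin p → ℝ, exp (-(x ⬝ᵥ A *ᵥ x) / 2)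
  set J := ∫ v in Ioi 0, v ^ (-(m / 2) - 1) * exp (-c / (2 * v)) with hJ_def
  have hI : 0 < I := integral_exp_neg_dotProduct_mulVec_pos A hb hA
  have hJ : 0 < J := by
    rw [hJ_def, integral_rpow_mul_exp_neg_div_Ioi (by linarith) hc]
    exact mul_pos (rpow_pos_of_pos (by positivity) _) (Gamma_pos_of_pos (by linarith))
  have hnum : ∫ v in Ioi 0, ∫ β, v * normalInvGammaKernel A μ c m v β =
      I * ∫ v in Ioi 0, v * (v ^ (-(m / 2) - 1) * exp (-c / (2 * v))) := by
    rw [← integral_const_mul]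
    refine setIntegral_congr_fun measurableSet_Ioi fun v (hv : 0 < v) => ?_
    rw [integral_const_mul, integral_normalInvGammaKernel_slice A μ hv, mul_left_comm]
  have hden : ∫ v in Ioi 0, ∫ β, normalInvGammaKernel A μ c m v β = I * J := by
    rw [← integral_const_mul]
    exact setIntegral_congr_fun measurableSet_Ioi fun v (hv : 0 < v) =>
      integral_normalInvGammaKernel_slice A μ hv
  rw [hnum, hden, integral_mul_rpow_mul_exp_neg_div_Ioi (by linarith) hc, mul_left_comm,
    mul_div_cancel_right₀ _ (mul_pos hI hJ).ne']
  ring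

end NormalInvGamma

theorem stmt_11_general (n p : ℕ) (hn2 : 2 < n)
    (X : Matrix (Fin n) (Fin p) ℝ) (Y : Fin n → ℝ) (hY : Y ≠ 0) (τ : ℝ) (hτ : 0 < τ)
    (Hτ : Matrix (Fin n) (Fin n) ℝ)
    (hH : Hτ = X * (Xᵀ * X + (τ ^ 2)⁻¹ • (1 : Matrix (Fin p) (Fin p) ℝ))⁻¹ * Xᵀ) :
    Integrable (fun q : ℝ × (Fin p → ℝ) =>
        q.1 * (q.1 ^ (-((n : ℝ) + p) / 2 - 1) *
          Real.exp (-((∑ i, (Y i - X.mulVec q.2 i) ^ 2) + (∑ j, (q.2 j) ^ 2) / τ ^ 2) /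
            (2 * q.1))))
      ((volume.restrict (Set.Ioi (0 : ℝ))).prod volume) ∧
    Integrable (fun q : ℝ × (Fin p → ℝ) =>
        q.1 ^ (-((n : ℝ) + p) / 2 - 1) *
          Real.exp (-((∑ i, (Y i - X.mulVec q.2 i) ^ 2) + (∑ j, (q.2 j) ^ 2) / τ ^ 2) /
            (2 * q.1)))
      ((volume.restrict (Set.Ioi (0 : ℝ))).prod volume) ∧
    (∫ v in Set.Ioi (0 : ℝ), ∫ β : Fin p → ℝ,
        v * (v ^ (-((n : ℝ) + p) / 2 - 1) *
          Real.exp (-((∑ i, (Y i - X.mulVec β i) ^ 2) + (∑ j, (β j) ^ 2) / τ ^ 2) /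
            (2 * v)))) /
      (∫ v in Set.Ioi (0 : ℝ), ∫ β : Fin p → ℝ,
        v ^ (-((n : ℝ) + p) / 2 - 1) *
          Real.exp (-((∑ i, (Y i - X.mulVec β i) ^ 2) + (∑ j, (β j) ^ 2) / τ ^ 2) /
            (2 * v))) =
      Y ⬝ᵥ ((1 - Hτ).mulVec Y) / ((n : ℝ) - 2) := by
  subst hH
  have hκ : 0 < (τ ^ 2)⁻¹ := by positivity
  have hsum (β : Fin p → ℝ) : ∑ i, (Y i - (X *ᵥ β) i) ^ 2 + (∑ j, β j ^ 2) / τ ^ 2 =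
      (Y - X *ᵥ β) ⬝ᵥ (Y - X *ᵥ β) + (τ ^ 2)⁻¹ * (β ⬝ᵥ β) := by
    simp only [dotProduct, Pi.sub_apply, sq, div_eq_inv_mul]
  have hA := mul_dotProduct_self_le_dotProduct_gram_add_smul_one_mulVec X (κ := (τ ^ 2)⁻¹)
  have hc := dotProduct_one_sub_mul_inv_mul_transpose_pos X hκ hY
  have hn : (2 : ℝ) < n := by exact_mod_cast hn2
  simp only [hsum, sub_dotProduct_sub_add_mul_dotProduct_self_eq X hκ Y]
  -- the integrands are now `normalInvGammaKernel` with `m = n`, up to unfolding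
  exact ⟨integrable_mul_normalInvGammaKernel _ _ hκ hA hc hn,
    integrable_normalInvGammaKernel _ _ hκ hA hc (by linarith),
    integral_mul_normalInvGammaKernel_div _ _ hκ hA hc hn⟩

/-- Equation (17): under the conjugate Bayesian ridge regression model, the marginal
posterior mean of σ² equals Yᵀ(I − H_τ)Y/(n − 2). -/
theorem stmt_11 (n p : ℕ) (hn : 1 ≤ n) (hp : 1 ≤ p) (hn2 : 2 < n)
    (X : Matrix (Fin n) (Fin p) ℝ) (Y : Fin n → ℝ) (hY : Y ≠ 0) (τ : ℝ) (hτ : 0 < τ)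
    (Hτ : Matrix (Fin n) (Fin n) ℝ)
    (hH : Hτ = X * (Xᵀ * X + (τ ^ 2)⁻¹ • (1 : Matrix (Fin p) (Fin p) ℝ))⁻¹ * Xᵀ) :
    Integrable (fun q : ℝ × (Fin p → ℝ) =>
        q.1 * (q.1 ^ (-((n : ℝ) + p) / 2 - 1) *
          Real.exp (-((∑ i, (Y i - X.mulVec q.2 i) ^ 2) + (∑ j, (q.2 j) ^ 2) / τ ^ 2) /
            (2 * q.1))))
      ((volume.restrict (Set.Ioi (0 : ℝ))).prod volume) ∧
    Integrable (fun q : ℝ × (Fin p → ℝ) =>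
        q.1 ^ (-((n : ℝ) + p) / 2 - 1) *
          Real.exp (-((∑ i, (Y i - X.mulVec q.2 i) ^ 2) + (∑ j, (q.2 j) ^ 2) / τ ^ 2) /
            (2 * q.1)))
      ((volume.restrict (Set.Ioi (0 : ℝ))).prod volume) ∧
    (∫ v in Set.Ioi (0 : ℝ), ∫ β : Fin p → ℝ,
        v * (v ^ (-((n : ℝ) + p) / 2 - 1) *
          Real.exp (-((∑ i, (Y i - X.mulVec β i) ^ 2) + (∑ j, (β j) ^ 2) / τ ^ 2) /
            (2 * v)))) /
      (∫ v in Set.Ioi (0 : ℝ), ∫ β : Fin p → ℝ,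
        v ^ (-((n : ℝ) + p) / 2 - 1) *
          Real.exp (-((∑ i, (Y i - X.mulVec β i) ^ 2) + (∑ j, (β j) ^ 2) / τ ^ 2) /
            (2 * v))) =
      Y ⬝ᵥ ((1 - Hτ).mulVec Y) / ((n : ℝ) - 2) :=
  stmt_11_general n p hn2 X Y hY τ hτ Hτ hH
end

section
/- Let λ₁ > 0 and K, S > 0 be constants, and let (n_k), (p_k), (q_k) be sequences of positive integers and (L_k), (s_k) sequences of nonnegative reals with L_k ≤ q_k·K and s_k ≤ S for all k. Define τ_k = λ₁·L_k/(2(n_k + p_k + 2)) and σ̂_k = τ_k + √(τ_k² + s_k²·n_k/(n_k + p_k + 2)). If p_k/n_k → ∞ and q_k/p_k → 0 as k → ∞, then σ̂_k → 0. -/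
open Filter Topology

/-!
Since `τ_k` is bounded by a multiple of `q_k / p_k` and the variance term `s_k² n_k / (n_k + p_k + 2)`
by a multiple of `n_k / p_k`, both tend to `0`; by continuity of the square root, so does
`σ̂_k = τ_k + √(τ_k² + s_k² n_k / (n_k + p_k + 2))`.
-/

theorem tendsto_add_sqrt_sq_add {ι : Type*} {l : Filter ι} {τ u : ι → ℝ}
    (hτ : Tendsto τ l (𝓝 0)) (hu : Tendsto u l (𝓝 0)) :
    Tendsto (fun k => τ k + √(τ k ^ 2 + u k)) l (𝓝 0) := by
  have hsum : Tendsto (fun k => τ k ^ 2 + u k) l (𝓝 0) := by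
    simpa using (hτ.pow 2).add hu
  simpa using hτ.add (Real.continuous_sqrt.tendsto 0 |>.comp hsum)

theorem tendsto_div_of_le_mul_of_tendsto_div {ι : Type*} {l : Filter ι} {x y p d : ι → ℝ} {C : ℝ}
    (hx0 : ∀ k, 0 ≤ x k) (hxy : ∀ k, x k ≤ C * y k) (hp : ∀ k, 0 < p k) (hpd : ∀ k, p k ≤ d k)
    (hyp : Tendsto (fun k => y k / p k) l (𝓝 0)) :
    Tendsto (fun k => x k / d k) l (𝓝 0) := by
  refine squeeze_zero (fun k => div_nonneg (hx0 k) ((hp k).le.trans (hpd k))) (fun k => ?_)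
    (by simpa using hyp.const_mul C)
  calc x k / d k ≤ x k / p k := div_le_div_of_nonneg_left (hx0 k) (hp k) (hpd k)
    _ ≤ C * y k / p k := div_le_div_of_nonneg_right (hxy k) (hp k).le
    _ = C * (y k / p k) := mul_div_assoc _ _ _

theorem stmt_15_general (lam1 K S : ℝ)
    (n p q : ℕ → ℕ) (hp : ∀ k, 1 ≤ p k)
    (L s : ℕ → ℝ) (hL0 : ∀ k, 0 ≤ L k) (hs0 : ∀ k, 0 ≤ s k)
    (hLK : ∀ k, L k ≤ (q k : ℝ) * K) (hsS : ∀ k, s k ≤ S)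
    (τ : ℕ → ℝ) (hτ : ∀ k, τ k = lam1 * L k / (2 * ((n k : ℝ) + (p k : ℝ) + 2)))
    (σhat : ℕ → ℝ)
    (hσ : ∀ k, σhat k = τ k +
      Real.sqrt ((τ k) ^ 2 + (s k) ^ 2 * (n k : ℝ) / ((n k : ℝ) + (p k : ℝ) + 2)))
    (hpn : Tendsto (fun k => (p k : ℝ) / (n k : ℝ)) atTop atTop)
    (hqp : Tendsto (fun k => (q k : ℝ) / (p k : ℝ)) atTop (nhds 0)) :
    Tendsto σhat atTop (nhds 0) := by
  have hp_pos : ∀ k, (0 : ℝ) < p k := fun k => by exact_mod_cast hp k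
  have hp_le : ∀ k, (p k : ℝ) ≤ n k + p k + 2 := fun k => by
    linarith [(n k).cast_nonneg (α := ℝ)]
  have hLd : Tendsto (fun k => L k / (2 * ((n k : ℝ) + p k + 2))) atTop (𝓝 0) :=
    tendsto_div_of_le_mul_of_tendsto_div hL0 (fun k => (hLK k).trans_eq (mul_comm _ _)) hp_pos
      (fun k => by linarith [hp_le k, hp_pos k]) hqp
  have hτ0 : Tendsto τ atTop (𝓝 0) := by
    simpa [funext hτ, mul_div_assoc] using hLd.const_mul lam1
  have hnp : Tendsto (fun k => (n k : ℝ) / p k) atTop (𝓝 0) := by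
    refine hpn.inv_tendsto_atTop.congr fun k => ?_
    rw [Pi.inv_apply, inv_div]
  have hvar : Tendsto (fun k => s k ^ 2 * n k / ((n k : ℝ) + p k + 2)) atTop (𝓝 0) :=
    tendsto_div_of_le_mul_of_tendsto_div (fun k => by positivity)
      (fun k => mul_le_mul_of_nonneg_right (pow_le_pow_left₀ (hs0 k) (hsS k) 2) (n k).cast_nonneg)
      hp_pos hp_le hnp
  rw [funext hσ]
  exact tendsto_add_sqrt_sq_add hτ0 hvar

/-- Section 6.2: the conjugate Spike-and-Slab Lasso MAP estimate of σ tends to 0 when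
p_k/n_k → ∞ and q_k/p_k → 0. -/
theorem stmt_15 (lam1 K S : ℝ) (hlam1 : 0 < lam1) (hK : 0 < K) (hS : 0 < S)
    (n p q : ℕ → ℕ) (hn : ∀ k, 1 ≤ n k) (hp : ∀ k, 1 ≤ p k) (hq : ∀ k, 1 ≤ q k)
    (L s : ℕ → ℝ) (hL0 : ∀ k, 0 ≤ L k) (hs0 : ∀ k, 0 ≤ s k)
    (hLK : ∀ k, L k ≤ (q k : ℝ) * K) (hsS : ∀ k, s k ≤ S)
    (τ : ℕ → ℝ) (hτ : ∀ k, τ k = lam1 * L k / (2 * ((n k : ℝ) + (p k : ℝ) + 2)))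
    (σhat : ℕ → ℝ)
    (hσ : ∀ k, σhat k = τ k +
      Real.sqrt ((τ k) ^ 2 + (s k) ^ 2 * (n k : ℝ) / ((n k : ℝ) + (p k : ℝ) + 2)))
    (hpn : Tendsto (fun k => (p k : ℝ) / (n k : ℝ)) atTop atTop)
    (hqp : Tendsto (fun k => (q k : ℝ) / (p k : ℝ)) atTop (nhds 0)) :
    Tendsto σhat atTop (nhds 0) :=
  stmt_15_general lam1 K S n p q hp L s hL0 hs0 hLK hsS τ hτ σhat hσ hpn hqp
end
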